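/- Let N ≥ 1 be an integer, h ≠ 0, R > 0, ε > 0, μ > 0. Set θ_j = 2π(j−1)/N, Q_j the rotation matrix of angle θ_j, P_j = R·Q_j·(1,0), M = diag(h/√(h²+R²), 1), M_j = Q_j M. Let c₁ = Rh/(2(h²+R²)^{3/2}), c₂ = (R²/(8(h²+R²)²))·(2h²/(h²+R²) + 1), let h₁ : [0,∞) → ℝ be any function, and define Ψ_{εμ}(z) = log(8/(ε²μ² + |z|²)²)·(1 + c₁z₁ + c₂|z|²) + (4R³/(h(h²+R²)^{3/2}))·h₁(|z|)cos(3θ), z = |z|e^{iθ}. Then for every i ∈ {1,…,N}, Σ_{j≠1} Ψ_{εμ}(M_j^{-1}(P₁ − P_j)) = Σ_{j≠i} Ψ_{εμ}(M_j^{-1}(P_i − P_j)); that is, the sum Σ_{j≠i} Ψ_{εμ}(M_j^{-1}(P_i − P_j)) is independent of i. -/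

import Mathlib

open Real

noncomputable section

/-- Points of `ℝ²` as pairs. -/
abbrev R2 : Type := ℝ × ℝ

/-- Rotation of `ℝ²` by angle `θ`. -/
def rot (θ : ℝ) (p : R2) : R2 :=
  (Real.cos θ * p.1 - Real.sin θ * p.2, Real.sin θ * p.1 + Real.cos θ * p.2)

/-- The linear map `M = diag(h/√(h²+R²), 1)`. -/
def Mmap (h R : ℝ) (z : R2) : R2 := (h / Real.sqrt (h ^ 2 + R ^ 2) * z.1, z.2)

/-- The inverse `M⁻¹ = diag(√(h²+R²)/h, 1)`. -/
def Minv (h R : ℝ) (p : R2) : R2 := (Real.sqrt (h ^ 2 + R ^ 2) / h * p.1, p.2)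

/-- `M_j⁻¹ = M⁻¹ Q_j⁻¹`, with `Q_j` the rotation of angle `θ_j = 2πj/N`
(indices `j : ℕ` starting from `0` represent `j+1 = 1, …, N`). -/
def Mjinv (h R : ℝ) (N : ℕ) (j : ℕ) (p : R2) : R2 :=
  Minv h R (rot (-(2 * Real.pi * j / N)) p)

/-- The vertex `P_j = R·Q_{2πj/N}·(1,0)` of the regular `N`-gon of radius `R`. -/
def Pt (R : ℝ) (N : ℕ) (j : ℕ) : R2 := rot (2 * Real.pi * j / N) (R, 0)

/-- The polar angle of `z ∈ ℝ²`. -/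
def argR2 (z : R2) : ℝ := Complex.arg ((z.1 : ℂ) + (z.2 : ℂ) * Complex.I)

/-- The locally defined approximate stream function of one helical filament:
`Ψ_{εμ}(z) = log(8/(ε²μ²+|z|²)²)(1 + c₁z₁ + c₂|z|²) + (4R³/(h(h²+R²)^{3/2})) h₁(|z|)cos 3θ`,
with `c₁ = Rh/(2(h²+R²)^{3/2})` and `c₂ = (R²/(8(h²+R²)²))(2h²/(h²+R²)+1)`. -/
def PsiEps (h R ε μ : ℝ) (h₁ : ℝ → ℝ) (z : R2) : ℝ :=
  Real.log (8 / (ε ^ 2 * μ ^ 2 + z.1 ^ 2 + z.2 ^ 2) ^ 2)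
      * (1 + R * h / (2 * Real.sqrt (h ^ 2 + R ^ 2) ^ 3) * z.1
          + R ^ 2 / (8 * (h ^ 2 + R ^ 2) ^ 2) * (2 * h ^ 2 / (h ^ 2 + R ^ 2) + 1)
            * (z.1 ^ 2 + z.2 ^ 2))
    + 4 * R ^ 3 / (h * Real.sqrt (h ^ 2 + R ^ 2) ^ 3)
        * h₁ (Real.sqrt (z.1 ^ 2 + z.2 ^ 2)) * Real.cos (3 * argR2 z)

/-! Rotating the whole picture by `Q_i⁻¹` shows that `M_j⁻¹(P_i − P_j) = M⁻¹(P_{i-j} − P_0)`,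
indices taken modulo `N`. Hence the `i`-th interaction sum is a sum over `j ≠ i` of a function of
`i - j ∈ ZMod N`, and `j ↦ i - j` maps `ZMod N ∖ {i}` bijectively onto `ZMod N ∖ {0}`. -/

open Finset

lemma rot_add (a b : ℝ) (p : R2) : rot (a + b) p = rot a (rot b p) := by
  simp only [rot, Real.cos_add, Real.sin_add, Prod.mk.injEq]
  constructor <;> ring

lemma rot_sub (θ : ℝ) (p q : R2) : rot θ (p - q) = rot θ p - rot θ q := by
  simp only [rot, Prod.fst_sub, Prod.snd_sub, Prod.mk_sub_mk, Prod.mk.injEq]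
  constructor <;> ring

lemma rot_add_int_mul_two_pi (θ : ℝ) (n : ℤ) (p : R2) : rot (θ + n * (2 * π)) p = rot θ p := by
  simp only [rot, Real.cos_add_int_mul_two_pi, Real.sin_add_int_mul_two_pi]

lemma rot_two_pi_mul_div_of_modEq {N : ℕ} {a b : ℤ} (hab : a ≡ b [ZMOD N]) (p : R2) :
    rot (2 * π * a / N) p = rot (2 * π * b / N) p := by
  rcases eq_or_ne N 0 with rfl | hN
  · simp
  obtain ⟨m, hm⟩ := hab.dvd
  have hb : (b : ℝ) = a + N * m := by rw [← sub_eq_iff_eq_add']; exact_mod_cast hm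
  rw [hb, ← rot_add_int_mul_two_pi _ m]
  congr 1
  field_simp

lemma Mjinv_Pt_sub_Pt (h R : ℝ) (N : ℕ) [NeZero N] (i j : ℕ) :
    Mjinv h R N j (Pt R N i - Pt R N j)
      = Minv h R (Pt R N ((i - j : ZMod N).val) - Pt R N 0) := by
  have hval : (((i - j : ZMod N).val : ℕ) : ℤ) ≡ (i : ℤ) - j [ZMOD N] := by
    rw [← ZMod.intCast_eq_intCast_iff]
    push_cast
    exact ZMod.natCast_zmod_val _
  have hij : -(2 * π * j / N) + 2 * π * i / N = 2 * π * ((i : ℤ) - j : ℤ) / N := by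
    push_cast; ring
  unfold Mjinv Pt
  rw [rot_sub, ← rot_add, ← rot_add, neg_add_cancel, hij, ← rot_two_pi_mul_div_of_modEq hval]
  simp

lemma sum_range_natCast_zmod {M : Type*} [AddCommMonoid M] (N : ℕ) [NeZero N] (F : ZMod N → M) :
    ∑ j ∈ range N, F j = ∑ x, F x :=
  sum_nbij' (↑) ZMod.val (by simp) (fun x _ => by simp [ZMod.val_lt])
    (fun _ hj => ZMod.val_cast_of_lt (mem_range.1 hj)) (fun x _ => ZMod.natCast_zmod_val x)
    (fun _ _ => rfl)

lemma sum_erase_range_sub_zmod {M : Type*} [AddCommGroup M] {N : ℕ} [NeZero N] (F : ZMod N → M)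
    {i : ℕ} (hi : i < N) :
    ∑ j ∈ (range N).erase i, F (i - j) = ∑ k ∈ (range N).erase 0, F k := by
  rw [sum_erase_eq_sub (mem_range.2 hi), sum_erase_eq_sub (mem_range.2 (NeZero.pos N)),
    sum_range_natCast_zmod N (fun j => F (i - j)), sum_range_natCast_zmod N F,
    Fintype.sum_equiv (Equiv.subLeft (i : ZMod N)) (fun x => F (i - x)) F fun _ => rfl]
  simp

lemma sum_erase_Mjinv_Pt_sub_Pt {M : Type*} [AddCommGroup M] (f : R2 → M) (h R : ℝ) {N i : ℕ}
    (hi : i < N) :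
    ∑ j ∈ (range N).erase i, f (Mjinv h R N j (Pt R N i - Pt R N j))
      = ∑ k ∈ (range N).erase 0, f (Minv h R (Pt R N k - Pt R N 0)) := by
  have : NeZero N := ⟨by omega⟩
  simp only [Mjinv_Pt_sub_Pt]
  rw [sum_erase_range_sub_zmod (fun x => f (Minv h R (Pt R N x.val - Pt R N 0))) hi]
  refine sum_congr rfl fun k hk => ?_
  rw [ZMod.val_cast_of_lt (mem_range.1 (mem_of_mem_erase hk))]

theorem interaction_sum_independent_of_vertex_general
    (N : ℕ) (h R ε μ : ℝ)
    (h₁ : ℝ → ℝ) :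
    ∀ i : ℕ, i < N →
      ∑ j ∈ (Finset.range N).erase 0,
          PsiEps h R ε μ h₁ (Mjinv h R N j (Pt R N 0 - Pt R N j))
        = ∑ j ∈ (Finset.range N).erase i,
            PsiEps h R ε μ h₁ (Mjinv h R N j (Pt R N i - Pt R N j)) := by
  intro i hi
  rw [sum_erase_Mjinv_Pt_sub_Pt _ _ _ hi, sum_erase_Mjinv_Pt_sub_Pt _ _ _ (i.zero_le.trans_lt hi)]

/-- **Well-posedness of the choice of `μ`** (Proposition A.1): the sum
`∑_{j≠i} Ψ_{εμ}(M_j⁻¹(P_i − P_j))` does not depend on `i`; it always equals its value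
at `i = 1` (index `0` here). -/
theorem interaction_sum_independent_of_vertex
    (N : ℕ) (hN : 1 ≤ N) (h R ε μ : ℝ) (hh : h ≠ 0) (hR : 0 < R) (hε : 0 < ε) (hμ : 0 < μ)
    (h₁ : ℝ → ℝ) :
    ∀ i : ℕ, i < N →
      ∑ j ∈ (Finset.range N).erase 0,
          PsiEps h R ε μ h₁ (Mjinv h R N j (Pt R N 0 - Pt R N j))
        = ∑ j ∈ (Finset.range N).erase i,
            PsiEps h R ε μ h₁ (Mjinv h R N j (Pt R N i - Pt R N j)) :=
  interaction_sum_independent_of_vertex_general N h R ε μ h₁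

end
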